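/- arXiv:1409.0483 — 3 statements merged into one kernel-verified Lean document; each statement's English description precedes it below -/
import Mathlib

section
/- Let n, α, q be positive integers with α + q ≤ n, and let m be an integer with F_n ≤ m < F_{n+1}. Suppose there exists k with α + 2 ≤ k ≤ α + q such that a_{k−1}(m) = a_k(m) = 0. Then for every integer h with 0 ≤ h < F_α and every index j with j > α + q, the Zeckendorf digits satisfy a_j(m + h) = a_j(m). In particular, the quantity #{j : j > α + q and a_j(x) = 1} takes the same value for every integer x with m ≤ x < m + F_α. -/
open Filter MeasureTheory

/-- Fibonacci numbers normalized so that `F 1 = 1`, `F 2 = 2`. -/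
def F (n : ℕ) : ℕ := Nat.fib (n + 1)

/-- `a` is the (unique) system of Zeckendorf digits: `a m j` is the `j`-th digit of `m`,
digits are `0` or `1`, indexed from `1`, no two consecutive digits are `1`,
digits vanish above `m`, and the digits decompose `m`. -/
def IsZeckendorf (a : ℕ → ℕ → ℕ) : Prop :=
  ∀ m : ℕ,
    a m 0 = 0 ∧
    (∀ j, a m j ≤ 1) ∧
    (∀ j, ¬(a m j = 1 ∧ a m (j + 1) = 1)) ∧
    (∀ j, m < j → a m j = 0) ∧
    m = ∑ j ∈ Finset.Icc 1 m, a m j * F j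

/-- Number of summands in the Zeckendorf decomposition of `m`. -/
def s (a : ℕ → ℕ → ℕ) (m : ℕ) : ℕ := ∑ j ∈ Finset.Icc 1 m, a m j

/-!
Write `m = L + T`, where `L` collects the Zeckendorf summands `F j` with `j ≤ k - 2` and `T` those
with `j ≥ k + 1`. Since the digits at `k - 1` and `k` vanish, `L < F (k - 1)`, so for
`h < F α ≤ F (k - 2)` we still have `L + h < F k`. Hence the Zeckendorf digits of `L + h`, which
live in positions `≤ k - 1`, followed by the zero digit at `k` and the digits of `T`, form an
admissible digit string of value `m + h`; by uniqueness of the Zeckendorf representation it is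
the representation of `m + h`, whose digits above `k` are therefore those of `m`.
-/

open Finset

lemma F_mono : Monotone F := fun _ _ h => Nat.fib_mono (by omega)

lemma F_add_two (n : ℕ) : F (n + 2) = F (n + 1) + F n := by
  simp only [F, show n + 2 + 1 = (n + 1) + 2 by ring, Nat.fib_add_two]
  ring

def digitSum (b : ℕ → ℕ) (N : ℕ) : ℕ := ∑ j ∈ Icc 1 N, b j * F j

lemma digitSum_succ (b : ℕ → ℕ) (N : ℕ) :
    digitSum b (N + 1) = digitSum b N + b (N + 1) * F (N + 1) :=
  sum_Icc_succ_top (by omega) _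

lemma digitSum_add_sum_Ioc (b : ℕ → ℕ) {N M : ℕ} (h : N ≤ M) :
    digitSum b M = digitSum b N + ∑ j ∈ Ioc N M, b j * F j := by
  have hIcc : ∀ n : ℕ, Icc 1 n = Ioc 0 n := fun n => Icc_add_one_left_eq_Ioc 0 n
  rw [digitSum, digitSum, hIcc, hIcc]
  exact (sum_Ioc_consecutive _ (Nat.zero_le N) h).symm

lemma digitSum_eq_of_le {b : ℕ → ℕ} {N M : ℕ} (h : N ≤ M) (hb : ∀ j, N < j → b j = 0) :
    digitSum b M = digitSum b N := by
  rw [digitSum_add_sum_Ioc b h, sum_eq_zero fun j hj => by rw [hb j (mem_Ioc.1 hj).1, zero_mul],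
    add_zero]

structure IsZeckDigits (b : ℕ → ℕ) : Prop where
  le_one : ∀ j, b j ≤ 1
  not_consecutive : ∀ j, ¬(b j = 1 ∧ b (j + 1) = 1)

namespace IsZeckDigits

variable {b c : ℕ → ℕ}

lemma digitSum_lt (hb : IsZeckDigits b) (N : ℕ) : digitSum b N < F (N + 1) := by
  induction N using Nat.twoStepInduction with
  | zero => simp [digitSum, F]
  | one =>
    have := hb.le_one 1
    have : digitSum b 1 = b 1 := by simp [digitSum, F]
    have : F (1 + 1) = 2 := rfl
    omega
  | more N _ ih =>
    change digitSum b (N + 1) < F (N + 2) at ih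
    change digitSum b (N + 2) < F (N + 3)
    have hF : F (N + 3) = F (N + 2) + F (N + 1) := F_add_two (N + 1)
    rcases Nat.le_one_iff_eq_zero_or_eq_one.1 (hb.le_one (N + 2)) with h2 | h2
    · rw [digitSum_succ, h2, zero_mul, add_zero]
      exact ih.trans_le (F_mono (by omega))
    · have hc : ¬(b (N + 1) = 1 ∧ b (N + 2) = 1) := hb.not_consecutive (N + 1)
      have h1 : b (N + 1) = 0 := by have := hb.le_one (N + 1); omega
      calc digitSum b (N + 2) = digitSum b N + F (N + 2) := by
            rw [digitSum_succ, digitSum_succ, h1, h2]; simp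
        _ < F (N + 3) := by omega

lemma eq_one_iff (hb : IsZeckDigits b) (N : ℕ) :
    b (N + 1) = 1 ↔ F (N + 1) ≤ digitSum b (N + 1) := by
  have hlt := hb.digitSum_lt N
  have := hb.le_one (N + 1)
  rw [digitSum_succ]
  constructor
  · intro h; rw [h]; omega
  · intro h
    by_contra hne
    rw [show b (N + 1) = 0 by omega, zero_mul, add_zero] at h
    omega

lemma eq_of_digitSum_eq (hb : IsZeckDigits b) (hc : IsZeckDigits c) {N : ℕ}
    (h : digitSum b N = digitSum c N) : ∀ j, 1 ≤ j → j ≤ N → b j = c j := by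
  induction N with
  | zero => omega
  | succ N ih =>
    have htop : b (N + 1) = c (N + 1) := by
      have := hb.le_one (N + 1); have := hc.le_one (N + 1)
      have := hb.eq_one_iff N; have := hc.eq_one_iff N
      rw [h] at *
      omega
    rw [digitSum_succ, digitSum_succ, htop, Nat.add_right_cancel_iff] at h
    intro j hj1 hjN
    rcases Nat.lt_or_ge j (N + 1) with hj | hj
    · exact ih h j hj1 (by omega)
    · rwa [show j = N + 1 by omega]

end IsZeckDigits

def splice (p : ℕ) (b d : ℕ → ℕ) (i : ℕ) : ℕ := if i ≤ p then b i else d i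

lemma IsZeckDigits.splice {b d : ℕ → ℕ} (hb : IsZeckDigits b) (hd : IsZeckDigits d) {p : ℕ}
    (hp : d (p + 1) = 0) : IsZeckDigits (splice p b d) where
  le_one i := by unfold _root_.splice; split_ifs <;> simp only [hb.le_one, hd.le_one]
  not_consecutive i := by
    unfold _root_.splice
    split_ifs with hi hi'
    · exact hb.not_consecutive i
    · rw [show i = p by omega, hp]; omega
    · omega
    · exact hd.not_consecutive i

lemma digitSum_splice (b d : ℕ → ℕ) {p N : ℕ} (h : p ≤ N) :
    digitSum (splice p b d) N + digitSum d p = digitSum b p + digitSum d N := by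
  rw [digitSum_add_sum_Ioc _ h, digitSum_add_sum_Ioc d h]
  have hlow : digitSum (splice p b d) p = digitSum b p :=
    sum_congr rfl fun i hi => by rw [splice, if_pos (mem_Icc.1 hi).2]
  have hhigh : ∑ j ∈ Ioc p N, splice p b d j * F j = ∑ j ∈ Ioc p N, d j * F j :=
    sum_congr rfl fun i hi => by rw [splice, if_neg (by simp at hi; omega)]
  rw [hlow, hhigh]
  ring

namespace IsZeckendorf

variable {a : ℕ → ℕ → ℕ} (ha : IsZeckendorf a)
include ha

lemma apply_zero (v : ℕ) : a v 0 = 0 := (ha v).1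

lemma isZeckDigits (v : ℕ) : IsZeckDigits (a v) := ⟨(ha v).2.1, (ha v).2.2.1⟩

lemma apply_eq_zero_of_lt {v j : ℕ} (h : v < j) : a v j = 0 := (ha v).2.2.2.1 j h

lemma digitSum_self (v : ℕ) : digitSum (a v) v = v := (ha v).2.2.2.2.symm

lemma digitSum_eq {v N : ℕ} (hN : ∀ j, N < j → a v j = 0) : digitSum (a v) N = v := by
  rw [← digitSum_eq_of_le (le_max_left N v) hN,
    digitSum_eq_of_le (le_max_right N v) fun _ => ha.apply_eq_zero_of_lt, ha.digitSum_self]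

lemma digit_eq_zero_of_lt {v N : ℕ} (hv : v < F (N + 1)) : ∀ j, N < j → a v j = 0 := by
  intro j hj
  by_contra hne
  have hj1 : a v j = 1 := by have := (ha.isZeckDigits v).le_one j; omega
  have hjv : j ≤ v := by by_contra h; exact hne (ha.apply_eq_zero_of_lt (by omega))
  have : F j ≤ v := calc
    F j = a v j * F j := by rw [hj1, one_mul]
    _ ≤ digitSum (a v) v :=
      single_le_sum (f := fun i => a v i * F i) (fun _ _ => Nat.zero_le _)
        (mem_Icc.2 ⟨by omega, hjv⟩)
    _ = v := ha.digitSum_self v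
  have := F_mono (show N + 1 ≤ j by omega)
  omega

lemma apply_digitSum {c : ℕ → ℕ} (hc : IsZeckDigits c) (hc0 : c 0 = 0) {N : ℕ}
    (hN : ∀ j, N < j → c j = 0) : a (digitSum c N) = c := by
  set v := digitSum c N
  have hvM : digitSum (a v) (max N v) = digitSum c (max N v) := by
    rw [digitSum_eq_of_le (le_max_left N v) hN,
      ha.digitSum_eq fun j hj => ha.apply_eq_zero_of_lt ((le_max_right N v).trans_lt hj)]
  funext j
  rcases Nat.eq_zero_or_pos j with rfl | hj
  · rw [ha.apply_zero, hc0]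
  rcases le_or_gt j (max N v) with hjM | hjM
  · exact (ha.isZeckDigits v).eq_of_digitSum_eq hc hvM j hj hjM
  · rw [ha.apply_eq_zero_of_lt (by omega), hN j (by omega)]

theorem digit_add_eq_of_two_zeros {m k h : ℕ} (h1 : a m (k + 1) = 0) (h2 : a m (k + 2) = 0)
    (hh : h ≤ F k) : ∀ j, k + 2 ≤ j → a (m + h) j = a m j := by
  have hL : digitSum (a m) (k + 1) < F (k + 1) := by
    rw [digitSum_succ, h1, zero_mul, add_zero]
    exact (ha.isZeckDigits m).digitSum_lt k
  set L := digitSum (a m) (k + 1)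
  have hv : L + h < F (k + 2) := by rw [F_add_two]; omega
  have hsum : digitSum (splice (k + 1) (a (L + h)) (a m)) (max (k + 1) m) = m + h := by
    have := digitSum_splice (a (L + h)) (a m) (le_max_left (k + 1) m)
    rw [ha.digitSum_eq (ha.digit_eq_zero_of_lt hv),
      ha.digitSum_eq fun j hj => ha.apply_eq_zero_of_lt ((le_max_right _ m).trans_lt hj)] at this
    omega
  have hspl0 : splice (k + 1) (a (L + h)) (a m) 0 = 0 := by
    rw [splice, if_pos (Nat.zero_le _), ha.apply_zero]
  have hsplN : ∀ j, max (k + 1) m < j → splice (k + 1) (a (L + h)) (a m) j = 0 := fun j hj => by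
    rw [splice, if_neg (by omega), ha.apply_eq_zero_of_lt (by omega)]
  intro j hj
  rw [← hsum, ha.apply_digitSum ((ha.isZeckDigits _).splice (ha.isZeckDigits m) h2) hspl0 hsplN,
    splice, if_neg (by omega)]

lemma filter_Ioc_digit_eq_one {v M : ℕ} (hvM : v ≤ M) (p : ℕ) :
    (Ioc p v).filter (fun j => a v j = 1) = (Ioc p M).filter (fun j => a v j = 1) := by
  ext j
  simp only [mem_filter, mem_Ioc]
  constructor
  · rintro ⟨⟨hpj, hjv⟩, hj⟩
    exact ⟨⟨hpj, hjv.trans hvM⟩, hj⟩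
  · rintro ⟨⟨hpj, -⟩, hj⟩
    refine ⟨⟨hpj, ?_⟩, hj⟩
    by_contra hvj
    rw [ha.apply_eq_zero_of_lt (by omega)] at hj
    exact zero_ne_one hj

end IsZeckendorf

theorem top_digits_constant_general
    (a : ℕ → ℕ → ℕ) (ha : IsZeckendorf a)
    (α q : ℕ)
    (m : ℕ)
    (k : ℕ) (hk1 : α + 2 ≤ k) (hk2 : k ≤ α + q)
    (hk3 : a m (k - 1) = 0) (hk4 : a m k = 0) :
    (∀ h : ℕ, h < F α → ∀ j, α + q < j → a (m + h) j = a m j) ∧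
    (∀ x : ℕ, m ≤ x → x < m + F α →
      ((Finset.Ioc (α + q) x).filter (fun j => a x j = 1)).card =
        ((Finset.Ioc (α + q) m).filter (fun j => a m j = 1)).card) := by
  obtain ⟨i, rfl⟩ : ∃ i, k = i + 2 := ⟨k - 2, by omega⟩
  have top : ∀ h : ℕ, h < F α → ∀ j, α + q < j → a (m + h) j = a m j := fun h hh j hj =>
    ha.digit_add_eq_of_two_zeros hk3 hk4 (hh.le.trans (F_mono (by omega))) j (by omega)
  refine ⟨top, fun x hmx hx => ?_⟩
  obtain ⟨h, rfl⟩ := Nat.exists_eq_add_of_le hmx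
  rw [ha.filter_Ioc_digit_eq_one hmx]
  congr 1
  exact filter_congr fun j hj => by rw [top h (by omega) j (mem_Ioc.1 hj).1]

/-- if `C₂(m)` has two consecutive zeros then the top digits are
constant on `[m, m + F α)`. -/
theorem top_digits_constant
    (a : ℕ → ℕ → ℕ) (ha : IsZeckendorf a)
    (n α q : ℕ) (hn : 0 < n) (hα : 0 < α) (hq : 0 < q) (hαq : α + q ≤ n)
    (m : ℕ) (hm1 : F n ≤ m) (hm2 : m < F (n + 1))
    (k : ℕ) (hk1 : α + 2 ≤ k) (hk2 : k ≤ α + q)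
    (hk3 : a m (k - 1) = 0) (hk4 : a m k = 0) :
    (∀ h : ℕ, h < F α → ∀ j, α + q < j → a (m + h) j = a m j) ∧
    (∀ x : ℕ, m ≤ x → x < m + F α →
      ((Finset.Ioc (α + q) x).filter (fun j => a x j = 1)).card =
        ((Finset.Ioc (α + q) m).filter (fun j => a m j = 1)).card) :=
  top_digits_constant_general a ha α q m k hk1 hk2 hk3 hk4
end

section
/- Let n, α, q be positive integers with α + q ≤ n, and let m be an integer with F_n ≤ m < F_{n+1}. Suppose there exists k with α + 2 ≤ k ≤ α + q such that a_{k−1}(m) = a_k(m) = 0, and set s₃(m) := #{j : j > α + q and a_j(m) = 1}. Then there exists a bijection t from the set of integers {x : m ≤ x < m + F_α} onto the set of integers {y : 0 ≤ y < F_α} such that for every x in the domain, 0 ≤ s(x) − s₃(m) − s(t(x)) < q. -/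
/-!
Split `m = h + c`, where `h` carries the Zeckendorf digits of `m` above `k` and `c < F (k - 1)`
those below `k - 1`. For `y < F α` we have `c + y < F k`, so the digits of `m + y` are those of `h`
together with those of `c + y`, whence `s (m + y) = #h + s (c + y)`, and `#h` exceeds `s₃(m)` by
at most `α + q - k`. It remains to permute `[0, F α)` by some `r` with
`s (r y) ≤ s (c + y) ≤ s (r y) + (k - 1 - α)`. The basic fact is that `s (F γ + v) - s v ∈ {0, 1}`
for `v < F (γ + 1)`. Hence for `c ≤ F α` the rotation `y ↦ (c + y) mod F α` works with defect `1`;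
for `F α < c < F (α + 1)` a rotation of the first `F (α - 1)` points followed by the recursive
permutation of the last `F (α - 2)` points still has defect `1`; and every further Fibonacci
number split off from `c` costs one more.
-/

open Filter MeasureTheory

open Finset

lemma F_pos (n : ℕ) : 0 < F n := Nat.fib_pos.mpr n.succ_pos

lemma bijOn_add_mod (c : ℕ) {N : ℕ} (hN : 0 < N) :
    Set.BijOn (fun y => (c + y) % N) (Set.Ico 0 N) (Set.Ico 0 N) := by
  have hmaps : Set.MapsTo (fun y => (c + y) % N) (Set.Ico 0 N) (Set.Ico 0 N) :=
    fun y _ => ⟨Nat.zero_le _, Nat.mod_lt _ hN⟩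
  refine ((Set.finite_Ico 0 N).injOn_iff_bijOn_of_mapsTo hmaps).mp fun y₁ h₁ y₂ h₂ h => ?_
  exact (Nat.ModEq.add_left_cancel' c h).eq_of_lt_of_lt h₁.2 h₂.2

lemma bijOn_Ico_append {f g : ℕ → ℕ} {A B : ℕ} (hf : Set.BijOn f (Set.Ico 0 A) (Set.Ico 0 A))
    (hg : Set.BijOn g (Set.Ico 0 B) (Set.Ico 0 B)) :
    Set.BijOn (fun y => if y < A then f y else A + g (y - A))
      (Set.Ico 0 (A + B)) (Set.Ico 0 (A + B)) := by
  have hf' : ∀ y < A, f y < A := fun y hy => (hf.mapsTo ⟨Nat.zero_le y, hy⟩).2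
  have hg' : ∀ y < B, g y < B := fun y hy => (hg.mapsTo ⟨Nat.zero_le y, hy⟩).2
  have hmaps : Set.MapsTo (fun y => if y < A then f y else A + g (y - A))
      (Set.Ico 0 (A + B)) (Set.Ico 0 (A + B)) := fun y hy => by
    simp only [Set.mem_Ico] at hy ⊢
    split_ifs with h
    · have := hf' y h
      omega
    · have := hg' (y - A) (by omega)
      omega
  refine ((Set.finite_Ico 0 (A + B)).injOn_iff_bijOn_of_mapsTo hmaps).mp
    fun y₁ h₁ y₂ h₂ h => ?_
  simp only [Set.mem_Ico] at h₁ h₂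
  dsimp only at h
  split_ifs at h with hy₁ hy₂ hy₂
  · exact hf.injOn ⟨Nat.zero_le _, hy₁⟩ ⟨Nat.zero_le _, hy₂⟩ h
  · have := hf' y₁ hy₁
    omega
  · have := hf' y₂ hy₂
    omega
  · have := hg.injOn (x₁ := y₁ - A) (x₂ := y₂ - A) ⟨Nat.zero_le _, by omega⟩
      ⟨Nat.zero_le _, by omega⟩ (by omega)
    omega

lemma bijOn_tsub_const_Ico (m N : ℕ) : Set.BijOn (· - m) (Set.Ico m (m + N)) (Set.Ico 0 N) :=
  ⟨fun x hx => ⟨Nat.zero_le _, show x - m < N by obtain ⟨_, _⟩ := hx; omega⟩,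
    fun x hx y hy h => by have := hx.1; have := hy.1; dsimp only at h; omega,
    fun y hy => ⟨m + y, ⟨by omega, by have := hy.2; omega⟩, by simp⟩⟩

lemma card_filter_lt_mem_Icc (S : Finset ℕ) {k l : ℕ} (hkl : k ≤ l) :
    (S.filter (k < ·)).card ∈
      Set.Icc (S.filter (l < ·)).card ((S.filter (l < ·)).card + (l - k)) := by
  refine ⟨card_le_card (monotone_filter_right S fun j hj => by omega), ?_⟩
  calc (S.filter (k < ·)).card ≤ (S.filter (l < ·) ∪ Ioc k l).card :=
        card_le_card fun j hj => by
          rw [mem_filter] at hj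
          rcases le_or_gt j l with hjl | hjl
          · exact mem_union_right _ (mem_Ioc.mpr ⟨hj.2, hjl⟩)
          · exact mem_union_left _ (mem_filter.mpr ⟨hj.1, hjl⟩)
    _ ≤ (S.filter (l < ·)).card + (l - k) := (card_union_le _ _).trans_eq (by rw [Nat.card_Ioc])

def IsZeckendorfSet (S : Finset ℕ) : Prop := 0 ∉ S ∧ ∀ i ∈ S, i + 1 ∉ S

def fibSum (S : Finset ℕ) : ℕ := ∑ j ∈ S, F j

namespace IsZeckendorfSet

variable {S T : Finset ℕ}

lemma mono (hT : IsZeckendorfSet T) (h : S ⊆ T) : IsZeckendorfSet S :=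
  ⟨fun h0 => hT.1 (h h0), fun i hi hi' => hT.2 i (h hi) (h hi')⟩

lemma union (hS : IsZeckendorfSet S) (hT : IsZeckendorfSet T) (h : ∀ i ∈ S, ∀ j ∈ T, i + 1 < j) :
    IsZeckendorfSet (S ∪ T) := by
  refine ⟨by simp [hS.1, hT.1], fun i hi hi' => ?_⟩
  simp only [mem_union] at hi hi'
  rcases hi with hi | hi <;> rcases hi' with hi' | hi'
  · exact hS.2 i hi hi'
  · exact absurd (h i hi (i + 1) hi') (lt_irrefl _)
  · have := h (i + 1) hi' i hi
    omega
  · exact hT.2 i hi hi'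

lemma fibSum_lt (hS : IsZeckendorfSet S) {t : ℕ} (h : ∀ i ∈ S, i < t) : fibSum S < F t := by
  induction S using Finset.induction_on_max generalizing t with
  | empty => exact F_pos t
  | insert j S hSj ih =>
    have hj0 : j ≠ 0 := fun hj => hS.1 (hj ▸ mem_insert_self j S)
    have hS' := hS.mono (subset_insert j S)
    have hlow : fibSum S < F (j - 1) := ih hS' fun i hi => by
      have : i + 1 ≠ j := fun hij => hS.2 i (mem_insert_of_mem hi) (hij ▸ mem_insert_self j S)
      have := hSj i hi
      omega
    have hjt : j + 1 ≤ t := h j (mem_insert_self j S)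
    have hF : F (j + 1) = F j + F (j - 1) := by
      obtain ⟨i, rfl⟩ := Nat.exists_eq_succ_of_ne_zero hj0
      exact F_add_two i
    calc fibSum (insert j S) = F j + fibSum S :=
          sum_insert fun hj => (hSj j hj).false
      _ < F (j + 1) := by omega
      _ ≤ F t := F_mono hjt

/-- The side of `S ∆ T` containing its largest element has the larger `fibSum`. -/
lemma eq_of_fibSum_eq (hS : IsZeckendorfSet S) (hT : IsZeckendorfSet T)
    (h : fibSum S = fibSum T) : S = T := by
  have key : ∀ {S T : Finset ℕ}, IsZeckendorfSet T → ∀ M ∈ S \ T, (∀ i ∈ T \ S, i ≤ M) →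
      fibSum (T \ S) < fibSum (S \ T) := fun hT M hM hle =>
    ((hT.mono sdiff_subset).fibSum_lt fun i hi => (hle i hi).lt_of_ne fun hiM =>
        (mem_sdiff.mp hi).2 (mem_sdiff.mp (hiM ▸ hM)).1).trans_le
      (single_le_sum (fun _ _ => Nat.zero_le _) hM)
  have hsplit : fibSum (S \ T) = fibSum (T \ S) := by
    have h1 := sum_inter_add_sum_sdiff S T F
    have h2 := sum_inter_add_sum_sdiff T S F
    rw [inter_comm] at h2
    unfold fibSum at h ⊢
    omega
  by_contra hne
  have hU : (S \ T ∪ T \ S).Nonempty := by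
    by_contra hU
    simp only [not_nonempty_iff_eq_empty, union_eq_empty, sdiff_eq_empty_iff_subset] at hU
    exact hne (hU.1.antisymm hU.2)
  have hmax := fun i hi => (S \ T ∪ T \ S).le_max' i hi
  rcases mem_union.mp ((S \ T ∪ T \ S).max'_mem hU) with hM | hM
  · exact (key hT _ hM fun i hi => hmax i (mem_union_right _ hi)).ne' hsplit
  · exact (key hS _ hM fun i hi => hmax i (mem_union_left _ hi)).ne hsplit

end IsZeckendorfSet

def digitSet (a : ℕ → ℕ → ℕ) (x : ℕ) : Finset ℕ := (Icc 1 x).filter (fun j => a x j = 1)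

section Digits

variable {a : ℕ → ℕ → ℕ} {S : Finset ℕ}

lemma isZeckendorfSet_digitSet (ha : IsZeckendorf a) (x : ℕ) : IsZeckendorfSet (digitSet a x) :=
  ⟨by simp [digitSet], fun i hi hi' =>
    (ha x).2.2.1 i ⟨(mem_filter.mp hi).2, (mem_filter.mp hi').2⟩⟩

lemma fibSum_digitSet (ha : IsZeckendorf a) (x : ℕ) : fibSum (digitSet a x) = x := by
  conv_rhs => rw [(ha x).2.2.2.2]
  rw [fibSum, digitSet, sum_filter]
  refine sum_congr rfl fun j _ => ?_
  rcases Nat.le_one_iff_eq_zero_or_eq_one.mp ((ha x).2.1 j) with h | h <;> simp [h]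

lemma s_eq_card_digitSet (ha : IsZeckendorf a) (x : ℕ) : s a x = (digitSet a x).card := by
  rw [s, digitSet, card_filter]
  refine sum_congr rfl fun j _ => ?_
  rcases Nat.le_one_iff_eq_zero_or_eq_one.mp ((ha x).2.1 j) with h | h <;> simp [h]

lemma s_fibSum (ha : IsZeckendorf a) (hS : IsZeckendorfSet S) : s a (fibSum S) = S.card := by
  rw [s_eq_card_digitSet ha, (isZeckendorfSet_digitSet ha _).eq_of_fibSum_eq hS
    (fibSum_digitSet ha _)]

lemma s_zero : s a 0 = 0 := by simp [s]

lemma s_fibSum_add (ha : IsZeckendorf a) (hS : IsZeckendorfSet S) {t w : ℕ}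
    (hSt : ∀ i ∈ S, t < i) (hw : w < F t) : s a (fibSum S + w) = S.card + s a w := by
  set W := digitSet a w
  have hWt : ∀ j ∈ W, j < t := fun j hj => F_mono.reflect_lt <|
    (single_le_sum (f := F) (fun _ _ => Nat.zero_le _) hj).trans_lt
      ((fibSum_digitSet ha w).symm ▸ hw :)
  have hdisj : Disjoint S W :=
    disjoint_left.mpr fun i hi hiW => (hSt i hi).not_gt (hWt i hiW)
  have hgood : IsZeckendorfSet (W ∪ S) := (isZeckendorfSet_digitSet ha w).union hS
    fun j hj i hi => by have := hSt i hi; have := hWt j hj; omega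
  calc s a (fibSum S + w) = s a (fibSum (W ∪ S)) := by
        unfold fibSum
        rw [sum_union hdisj.symm, add_comm (∑ j ∈ W, F j)]
        exact congrArg (fun x => s a (∑ j ∈ S, F j + x)) (fibSum_digitSet ha w).symm
    _ = S.card + s a w := by
        rw [s_fibSum ha hgood, card_union_of_disjoint hdisj.symm, s_eq_card_digitSet ha, add_comm]

lemma s_F_add_of_lt (ha : IsZeckendorf a) {j w : ℕ} (hw : w < F j) :
    s a (F (j + 1) + w) = s a w + 1 := by
  have h := s_fibSum_add ha (S := {j + 1}) ⟨by simp, by simp⟩ (by simp) hw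
  rwa [fibSum, sum_singleton, card_singleton, add_comm 1] at h

lemma exists_s_add_eq_of_digits_eq_zero (ha : IsZeckendorf a) {m k : ℕ}
    (hk₁ : a m (k - 1) = 0) (hk : a m k = 0) :
    ∃ c < F (k - 1), ∀ y, c + y < F k →
      s a (m + y) = ((digitSet a m).filter (k < ·)).card + s a (c + y) := by
  have hD := isZeckendorfSet_digitSet ha m
  set H := (digitSet a m).filter (k < ·)
  set L := (digitSet a m).filter (¬ k < ·)
  have hm : fibSum H + fibSum L = m := by
    rw [fibSum, fibSum, sum_filter_add_sum_filter_not]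
    exact fibSum_digitSet ha m
  refine ⟨fibSum L, (hD.mono (filter_subset _ _)).fibSum_lt fun i hi => ?_, fun y hy => ?_⟩
  · simp only [digitSet, mem_filter, mem_Icc] at hi
    have : i ≠ k - 1 := fun h => by simp [← h, hi.1.2] at hk₁
    have : i ≠ k := fun h => by simp [← h, hi.1.2] at hk
    omega
  · rw [← hm, add_assoc]
    exact s_fibSum_add ha (hD.mono (filter_subset _ _)) (fun i hi => (mem_filter.mp hi).2) hy

end Digits

section Shift

variable {a : ℕ → ℕ → ℕ}

lemma s_F_add_mem_Icc (ha : IsZeckendorf a) {γ v : ℕ} (hv : v < F (γ + 1)) :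
    s a (F γ + v) ∈ Set.Icc (s a v) (s a v + 1) := by
  induction γ using Nat.strong_induction_on generalizing v with
  | _ γ ih =>
  have hs1 : s a 1 = s a 0 + 1 := s_F_add_of_lt ha (F_pos 0)
  rw [Set.mem_Icc]
  match γ, ih with
  | 0, _ =>
    obtain rfl : v = 0 := by simpa [F] using hv
    simp [F, hs1, s_zero]
  | 1, _ =>
    have hs2 : s a 2 = s a 0 + 1 := s_F_add_of_lt ha (F_pos 1)
    have hv : v < 2 := hv
    interval_cases v <;> simp [F, hs1, hs2, s_zero]
  | δ + 2, ih =>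
    have hF2 : F (δ + 2) = F (δ + 1) + F δ := F_add_two δ
    have hF3 : F (δ + 3) = F (δ + 2) + F (δ + 1) := F_add_two (δ + 1)
    have hv : v < F (δ + 3) := hv
    rcases lt_or_ge v (F (δ + 1)) with hv1 | hv1
    · have : s a (F (δ + 2) + v) = s a v + 1 := s_F_add_of_lt ha hv1
      omega
    rcases lt_or_ge v (F (δ + 2)) with hv2 | hv2
    · obtain ⟨v', rfl⟩ := Nat.exists_eq_add_of_le hv1
      have e1 : s a (F (δ + 1) + v') = s a v' + 1 := s_F_add_of_lt ha (j := δ) (by omega)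
      have e2 : s a (F (δ + 3) + v') = s a v' + 1 := s_F_add_of_lt ha (j := δ + 2) (by omega)
      rw [show F (δ + 2) + (F (δ + 1) + v') = F (δ + 3) + v' by omega, e1, e2]
      omega
    · obtain ⟨v', rfl⟩ := Nat.exists_eq_add_of_le hv2
      have e1 : s a (F (δ + 2) + v') = s a v' + 1 := s_F_add_of_lt ha (j := δ + 1) (by omega)
      have e2 : s a (F (δ + 3) + (F δ + v')) = s a (F δ + v') + 1 :=
        s_F_add_of_lt ha (j := δ + 2) (by omega)
      have := ih δ (by omega) (v := v') (by omega)
      rw [show F (δ + 2) + (F (δ + 2) + v') = F (δ + 3) + (F δ + v') by omega, e1, e2]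
      rw [Set.mem_Icc] at this
      omega

def ShiftMatching (a : ℕ → ℕ → ℕ) (α c d : ℕ) : Prop :=
  ∃ r : ℕ → ℕ, Set.BijOn r (Set.Ico 0 (F α)) (Set.Ico 0 (F α)) ∧
    ∀ y < F α, s a (c + y) ∈ Set.Icc (s a (r y)) (s a (r y) + d)

lemma ShiftMatching.mono {α c d d' : ℕ} (h : ShiftMatching a α c d) (hd : d ≤ d') :
    ShiftMatching a α c d' := by
  obtain ⟨r, hr, hrs⟩ := h
  exact ⟨r, hr, fun y hy => Set.Icc_subset_Icc_right (by omega) (hrs y hy)⟩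

lemma shiftMatching_of_le (ha : IsZeckendorf a) {α c : ℕ} (hc : c ≤ F α) :
    ShiftMatching a α c 1 := by
  refine ⟨fun y => (c + y) % F α, bijOn_add_mod c (F_pos α), fun y hy => ?_⟩
  dsimp only
  rcases lt_or_ge (c + y) (F α) with h | h
  · rw [Nat.mod_eq_of_lt h, Set.mem_Icc]
    omega
  · obtain ⟨w, hw⟩ := Nat.exists_eq_add_of_le h
    have hwα : w < F α := by omega
    simp only [hw, Nat.add_mod_left, Nat.mod_eq_of_lt hwα]
    exact s_F_add_mem_Icc ha (hwα.trans_le (F_mono α.le_succ))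

lemma shiftMatching_of_lt (ha : IsZeckendorf a) {α c : ℕ} (hc : c < F (α + 1)) :
    ShiftMatching a α c 1 := by
  induction α using Nat.strong_induction_on generalizing c with
  | _ α ih =>
  rcases le_or_gt c (F α) with hcα | hcα
  · exact shiftMatching_of_le ha hcα
  match α, ih, hc, hcα with
  | 0, _, hc, hcα =>
    have : F 0 = F (0 + 1) := rfl
    omega
  | 1, _, hc, hcα =>
    have : F (1 + 1) = F 1 + 1 := rfl
    omega
  | β + 2, ih, hc, hcα =>
    have hF2 : F (β + 2) = F (β + 1) + F β := F_add_two β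
    have hF3 : F (β + 3) = F (β + 2) + F (β + 1) := F_add_two (β + 1)
    have hc : c < F (β + 3) := hc
    obtain ⟨c₁, rfl⟩ := Nat.exists_eq_add_of_le hcα.le
    obtain ⟨r, hr, hrs⟩ := ih β (by omega) (c := c₁) (by omega)
    refine ⟨fun y => if y < F (β + 1) then (c₁ + y) % F (β + 1) else F (β + 1) + r (y - F (β + 1)),
      ?_, fun y hy => ?_⟩
    · rw [hF2]
      exact bijOn_Ico_append (bijOn_add_mod c₁ (F_pos _)) hr
    have mem_of_eq : ∀ {x w : ℕ}, s a x = s a w + 1 → s a x ∈ Set.Icc (s a w) (s a w + 1) :=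
      fun h => by rw [h, Set.mem_Icc]; omega
    dsimp only
    split_ifs with hy₁
    · rcases lt_or_ge (c₁ + y) (F (β + 1)) with h | h
      · rw [Nat.mod_eq_of_lt h, add_assoc]
        exact mem_of_eq (s_F_add_of_lt ha h)
      · obtain ⟨w, hw⟩ := Nat.exists_eq_add_of_le h
        have e : s a (F (β + 3) + w) = s a w + 1 := s_F_add_of_lt ha (j := β + 2) (by omega)
        rw [show F (β + 2) + c₁ + y = F (β + 3) + w by omega, hw, Nat.add_mod_left,
          Nat.mod_eq_of_lt (by omega)]
        exact mem_of_eq e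
    · set u := y - F (β + 1)
      have hu : u < F β := by omega
      have hru : r u < F β := (hr.mapsTo ⟨Nat.zero_le u, hu⟩).2
      have e1 : s a (F (β + 3) + (c₁ + u)) = s a (c₁ + u) + 1 :=
        s_F_add_of_lt ha (j := β + 2) (by omega)
      have e2 : s a (F (β + 1) + r u) = s a (r u) + 1 := s_F_add_of_lt ha (j := β) hru
      rw [show F (β + 2) + c₁ + y = F (β + 3) + (c₁ + u) by omega, e1, e2]
      have := hrs u hu
      rw [Set.mem_Icc] at this ⊢
      omega

lemma ShiftMatching.F_add (ha : IsZeckendorf a) {α c d γ : ℕ} (h : ShiftMatching a α c d)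
    (hc : c + F α ≤ F (γ + 1)) : ShiftMatching a α (F γ + c) (d + 1) := by
  obtain ⟨r, hr, hrs⟩ := h
  refine ⟨r, hr, fun y hy => ?_⟩
  have h₁ := hrs y hy
  have h₂ := s_F_add_mem_Icc ha (γ := γ) (v := c + y) (by omega)
  rw [add_assoc]
  rw [Set.mem_Icc] at h₁ h₂ ⊢
  omega

lemma shiftMatching_of_lt_F_add (ha : IsZeckendorf a) {α c : ℕ} (e : ℕ)
    (hc : c < F (α + e + 1)) : ShiftMatching a α c (e + 1) := by
  induction e generalizing c with
  | zero => exact shiftMatching_of_lt ha hc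
  | succ e ih =>
    rcases lt_or_ge c (F (α + e + 1)) with h | h
    · exact (ih h).mono (by omega)
    obtain ⟨c', rfl⟩ := Nat.exists_eq_add_of_le h
    have hF : F (α + e + 1 + 1) = F (α + e + 1) + F (α + e) := F_add_two _
    have hc : F (α + e + 1) + c' < F (α + e + 1 + 1) := hc
    have hFα : F α ≤ F (α + e + 1) := F_mono (by omega)
    have hFe : F (α + e) ≤ F (α + e + 1) := F_mono (by omega)
    exact (ih (c := c') (by omega)).F_add ha (by omega)

end Shift

theorem exists_shift_bijection_general
    (a : ℕ → ℕ → ℕ) (ha : IsZeckendorf a)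
    (α q : ℕ)
    (m : ℕ)
    (k : ℕ) (hk1 : α + 2 ≤ k) (hk2 : k ≤ α + q)
    (hk3 : a m (k - 1) = 0) (hk4 : a m k = 0) :
    ∃ t : (Set.Ico m (m + F α)) ≃ (Set.Ico 0 (F α)),
      ∀ x : Set.Ico m (m + F α),
        s a ((t x : ℕ)) + ((Finset.Ioc (α + q) m).filter (fun j => a m j = 1)).card
            ≤ s a (x : ℕ) ∧
        s a (x : ℕ) <
          s a ((t x : ℕ)) + ((Finset.Ioc (α + q) m).filter (fun j => a m j = 1)).card + q := by
  obtain ⟨c, hc, hsplit⟩ := exists_s_add_eq_of_digits_eq_zero ha hk3 hk4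
  obtain ⟨r, hr, hrs⟩ := shiftMatching_of_lt_F_add ha (α := α) (k - 2 - α)
    (hc.trans_eq (by congr 1; omega))
  have hs₃ : (Ioc (α + q) m).filter (fun j => a m j = 1) = (digitSet a m).filter (α + q < ·) := by
    ext j
    simp only [digitSet, mem_filter, mem_Ioc, mem_Icc]
    omega
  have hH := card_filter_lt_mem_Icc (digitSet a m) hk2
  have hFk := F_add_two (k - 2)
  rw [show k - 2 + 2 = k by omega, show k - 2 + 1 = k - 1 by omega] at hFk
  have hFα : F α ≤ F (k - 2) := F_mono (by omega)
  set t := (hr.comp (bijOn_tsub_const_Ico m (F α))).equiv _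
  have ht : ∀ x, (t x : ℕ) = r (x - m) := fun _ => rfl
  refine ⟨t, fun ⟨x, hx⟩ => ?_⟩
  obtain ⟨y, rfl⟩ := Nat.exists_eq_add_of_le hx.1
  have hy : y < F α := by have := hx.2; omega
  have hry := hrs y hy
  rw [ht, Nat.add_sub_cancel_left, hs₃, hsplit y (by omega)]
  rw [Set.mem_Icc] at hry hH
  omega

/-- the bijection `t : [m, m + F α) → [0, F α)` with
`0 ≤ s(x) − s₃(m) − s(t x) < q`. -/
theorem exists_shift_bijection
    (a : ℕ → ℕ → ℕ) (ha : IsZeckendorf a)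
    (n α q : ℕ) (hn : 0 < n) (hα : 0 < α) (hq : 0 < q) (hαq : α + q ≤ n)
    (m : ℕ) (hm1 : F n ≤ m) (hm2 : m < F (n + 1))
    (k : ℕ) (hk1 : α + 2 ≤ k) (hk2 : k ≤ α + q)
    (hk3 : a m (k - 1) = 0) (hk4 : a m k = 0) :
    ∃ t : (Set.Ico m (m + F α)) ≃ (Set.Ico 0 (F α)),
      ∀ x : Set.Ico m (m + F α),
        s a ((t x : ℕ)) + ((Finset.Ioc (α + q) m).filter (fun j => a m j = 1)).card
            ≤ s a (x : ℕ) ∧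
        s a (x : ℕ) <
          s a ((t x : ℕ)) + ((Finset.Ioc (α + q) m).filter (fun j => a m j = 1)).card + q :=
  exists_shift_bijection_general a ha α q m k hk1 hk2 hk3 hk4
end

section
/- Let g : ℝ → ℝ be continuous, and let g_n : ℝ → ℝ be a sequence of nondecreasing functions converging pointwise to g. Let (ε_n) be a sequence of nonnegative reals with ε_n → 0, and let f_n : ℝ → ℝ be functions satisfying g_n(x − ε_n) ≤ f_n(x) ≤ g_n(x + ε_n) for all x ∈ ℝ and all n. Then f_n converges pointwise to g: for every x ∈ ℝ, f_n(x) → g(x) as n → ∞. -/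
open Filter Topology

/-! Let `a < g x`. By continuity there is `y < x` with `a < g y`, hence `a < gn n y` for large `n`;
once `ε n < x - y`, monotonicity gives `gn n y ≤ gn n (x - ε n) ≤ f n x`. The upper bound is
symmetric, and together they are the order-topology characterisation of `f n x → g x`. -/

section

variable {ι β : Type*} {l : Filter ι} [LinearOrder β] [TopologicalSpace β] [OrderTopology β]
  {g : ℝ → β} {gn : ι → ℝ → β} {ε : ι → ℝ} {f : ι → ℝ → β} {x : ℝ}

theorem eventually_lt_of_apply_sub_le (hg : ContinuousAt g x) (hmono : ∀ i, Monotone (gn i))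
    (hconv : ∀ y, Tendsto (fun i => gn i y) l (𝓝 (g y))) (hε : Tendsto ε l (𝓝 0))
    (hlow : ∀ i, gn i (x - ε i) ≤ f i x) {a : β} (ha : a < g x) :
    ∀ᶠ i in l, a < f i x := by
  have hleft : ∀ᶠ y in 𝓝[<] x, y < x ∧ a < g y :=
    (eventually_nhdsWithin_of_forall fun _ hy => hy).and
      (nhdsWithin_le_nhds (hg.eventually (lt_mem_nhds ha)))
  obtain ⟨y, hyx, hay⟩ := hleft.exists
  filter_upwards [(hconv y).eventually (lt_mem_nhds hay),
    hε.eventually (gt_mem_nhds (sub_pos.2 hyx))] with i hai hεi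
  exact hai.trans_le ((hmono i (by linarith)).trans (hlow i))

theorem eventually_lt_of_le_apply_add (hg : ContinuousAt g x) (hmono : ∀ i, Monotone (gn i))
    (hconv : ∀ y, Tendsto (fun i => gn i y) l (𝓝 (g y))) (hε : Tendsto ε l (𝓝 0))
    (hup : ∀ i, f i x ≤ gn i (x + ε i)) {b : β} (hb : g x < b) :
    ∀ᶠ i in l, f i x < b := by
  have hright : ∀ᶠ y in 𝓝[>] x, x < y ∧ g y < b :=
    (eventually_nhdsWithin_of_forall fun _ hy => hy).and
      (nhdsWithin_le_nhds (hg.eventually (gt_mem_nhds hb)))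
  obtain ⟨y, hxy, hyb⟩ := hright.exists
  filter_upwards [(hconv y).eventually (gt_mem_nhds hyb),
    hε.eventually (gt_mem_nhds (sub_pos.2 hxy))] with i hib hεi
  exact ((hup i).trans (hmono i (by linarith))).trans_lt hib

end

theorem sandwiched_pointwise_convergence_general
    (g : ℝ → ℝ) (hg : Continuous g)
    (gn : ℕ → ℝ → ℝ) (hgn_mono : ∀ n, Monotone (gn n))
    (hgn_conv : ∀ x : ℝ, Tendsto (fun n => gn n x) atTop (nhds (g x)))
    (ε : ℕ → ℝ) (hε : Tendsto ε atTop (nhds 0))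
    (f : ℕ → ℝ → ℝ)
    (hf : ∀ n, ∀ x : ℝ, gn n (x - ε n) ≤ f n x ∧ f n x ≤ gn n (x + ε n))
    (x : ℝ) :
    Tendsto (fun n => f n x) atTop (nhds (g x)) :=
  tendsto_order.2
    ⟨fun _ ha => eventually_lt_of_apply_sub_le hg.continuousAt hgn_mono hgn_conv hε
      (fun n => (hf n x).1) ha,
    fun _ hb => eventually_lt_of_le_apply_add hg.continuousAt hgn_mono hgn_conv hε
      (fun n => (hf n x).2) hb⟩

/-- pointwise convergence of sandwiched functions to a continuous
pointwise limit of nondecreasing functions. -/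
theorem sandwiched_pointwise_convergence
    (g : ℝ → ℝ) (hg : Continuous g)
    (gn : ℕ → ℝ → ℝ) (hgn_mono : ∀ n, Monotone (gn n))
    (hgn_conv : ∀ x : ℝ, Tendsto (fun n => gn n x) atTop (nhds (g x)))
    (ε : ℕ → ℝ) (hε_nonneg : ∀ n, 0 ≤ ε n) (hε : Tendsto ε atTop (nhds 0))
    (f : ℕ → ℝ → ℝ)
    (hf : ∀ n, ∀ x : ℝ, gn n (x - ε n) ≤ f n x ∧ f n x ≤ gn n (x + ε n))
    (x : ℝ) :
    Tendsto (fun n => f n x) atTop (nhds (g x)) :=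
  sandwiched_pointwise_convergence_general g hg gn hgn_mono hgn_conv ε hε f hf x
end
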